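/- There exist constants c₁, c₂ > 0 such that for every n ≥ 2: (i) every linear bijection S : ℝ^{2n} → ℝ^{2n} satisfies ‖S‖_{Z_2^n → ℓ_2^{2n}} · ‖S⁻¹‖_{ℓ_2^{2n} → Z_2^n} ≥ c₁·log n; and (ii) there exists a linear bijection S : ℝ^{2n} → ℝ^{2n} with ‖S‖_{Z_2^n → ℓ_2^{2n}} · ‖S⁻¹‖_{ℓ_2^{2n} → Z_2^n} ≤ c₂·log n. In other words, the Banach–Mazur distance between Z_2^n and ℓ_2^{2n} is of order log n. -/

import Mathlib

/-!
Write `F` for the Kalton–Peck map and `K = 2 log n + 2`. Splitting the coordinates of `b`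
according to whether `|b_j| / ‖b‖₂ ≥ 1 / n²` gives `F(b)_j² ≤ 4 log² n · b_j² + 4 ‖b‖₂² / n²`,
hence `‖F(b)‖₂ ≤ K ‖b‖₂`. This makes `(a, b) ↦ (a, K b)` an isomorphism with
`‖S‖ ≤ 2K` and `‖S⁻¹‖ ≤ 2 + 1 / K`, which gives the upper bound.

For the lower bound let `A = ‖S‖` and `B = ‖S⁻¹‖`. Since `‖(0, e_i)‖_Z = 1`, the vectors
`u_i = S(0, e_i)` have Euclidean norm at most `A`, and by the parallelogram law there are signs
`s_i = ±1` with `‖∑ s_i u_i‖₂² ≤ ∑ ‖u_i‖₂² ≤ n A²`. On the other hand `F(s) = -(log n / 2) s`, so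
`‖(0, s)‖_Z = √n (1 + log n / 2)`, and `‖(0, s)‖_Z ≤ B ‖S(0, s)‖₂ ≤ B √n A`.
-/

open scoped BigOperators

/-- The Euclidean norm on `ℝⁿ`. -/
noncomputable def l2 {n : ℕ} (b : Fin n → ℝ) : ℝ := Real.sqrt (∑ j, b j ^ 2)

/-- The Kalton–Peck map `F(b)_j = b_j log(|b_j|/‖b‖₂)`, with `F(b)_j = 0` when `b_j = 0`. -/
noncomputable def KPF {n : ℕ} (b : Fin n → ℝ) : Fin n → ℝ :=
  fun j => if b j = 0 then 0 else b j * Real.log (|b j| / l2 b)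

/-- The Kalton–Peck quasi-norm `‖(a,b)‖ = ‖b‖₂ + ‖a - F(b)‖₂` on `ℝⁿ × ℝⁿ`. -/
noncomputable def znorm {n : ℕ} (x : (Fin n → ℝ) × (Fin n → ℝ)) : ℝ :=
  l2 x.2 + l2 (x.1 - KPF x.2)

/-- Operator "norm" `sup_{x ≠ 0} N_W(T x) / N_V(x)` of a map `T` between spaces
equipped with (quasi-)norms `N_V`, `N_W`. -/
noncomputable def ratioSup {V W : Type*} [Zero V] (NV : V → ℝ) (NW : W → ℝ) (T : V → W) : ℝ :=
  ⨆ x : {x : V // x ≠ 0}, NW (T x.1) / NV x.1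

/-- The Euclidean norm on `ℝⁿ × ℝⁿ ≅ ℝ^{2n}`. -/
noncomputable def l2p {n : ℕ} (x : (Fin n → ℝ) × (Fin n → ℝ)) : ℝ :=
  Real.sqrt ((∑ j, x.1 j ^ 2) + ∑ j, x.2 j ^ 2)

open Real

local notation "𝕍" n:max => (Fin n → ℝ) × (Fin n → ℝ)

theorem exists_abs_eq_one_norm_sum_smul_sq_le {ι E : Type*} [NormedAddCommGroup E]
    [InnerProductSpace ℝ E] (s : Finset ι) (u : ι → E) :
    ∃ ε : ι → ℝ, (∀ i, |ε i| = 1) ∧ ‖∑ i ∈ s, ε i • u i‖ ^ 2 ≤ ∑ i ∈ s, ‖u i‖ ^ 2 := by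
  classical
  induction s using Finset.induction_on with
  | empty => exact ⟨1, fun _ => abs_one, by simp⟩
  | insert a s ha ih =>
    obtain ⟨ε, hε, hle⟩ := ih
    set v := ∑ i ∈ s, ε i • u i
    obtain ⟨σ, hσ, hσle⟩ : ∃ σ : ℝ, |σ| = 1 ∧ ‖v + σ • u a‖ ^ 2 ≤ ‖v‖ ^ 2 + ‖u a‖ ^ 2 := by
      have := parallelogram_law_with_norm ℝ v (u a)
      rcases le_total (‖v + u a‖ ^ 2) (‖v - u a‖ ^ 2) with h | h
      · exact ⟨1, abs_one, by rw [one_smul]; linarith⟩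
      · exact ⟨-1, by simp, by rw [neg_one_smul, ← sub_eq_add_neg]; linarith⟩
    refine ⟨Function.update ε a σ, fun i => ?_, ?_⟩
    · rcases eq_or_ne i a with rfl | hi
      · simpa using hσ
      · simpa [hi] using hε i
    · have hs : ∑ i ∈ s, Function.update ε a σ i • u i = v :=
        Finset.sum_congr rfl fun i hi => by rw [Function.update_of_ne (ne_of_mem_of_not_mem hi ha)]
      rw [Finset.sum_insert ha, Finset.sum_insert ha, Function.update_self, hs, add_comm]
      linarith

section RatioSup

variable {V W : Type*} [Zero V] {NV : V → ℝ} {NW : W → ℝ} {T : V → W} {C : ℝ}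

theorem ratioSup_nonneg (hNV : ∀ x, 0 ≤ NV x) (hNW : ∀ y, 0 ≤ NW y) : 0 ≤ ratioSup NV NW T :=
  Real.iSup_nonneg fun _ => div_nonneg (hNW _) (hNV _)

theorem ratioSup_le (hC : 0 ≤ C) (hNV : ∀ x, x ≠ 0 → 0 < NV x)
    (h : ∀ x, x ≠ 0 → NW (T x) ≤ C * NV x) : ratioSup NV NW T ≤ C :=
  Real.iSup_le (fun x => (div_le_iff₀ (hNV x.1 x.2)).2 (h x.1 x.2)) hC

theorem le_ratioSup_mul (hNV : ∀ x, x ≠ 0 → 0 < NV x) (h : ∀ x, x ≠ 0 → NW (T x) ≤ C * NV x)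
    {x : V} (hx : x ≠ 0) : NW (T x) ≤ ratioSup NV NW T * NV x := by
  have hbdd : BddAbove (Set.range fun x : {x : V // x ≠ 0} => NW (T x.1) / NV x.1) :=
    ⟨C, Set.forall_mem_range.2 fun x => (div_le_iff₀ (hNV x.1 x.2)).2 (h x.1 x.2)⟩
  exact (div_le_iff₀ (hNV x hx)).1 (le_ciSup hbdd ⟨x, hx⟩)

end RatioSup

theorem sq_mul_log_le {t N : ℝ} (ht0 : 0 < t) (ht1 : t ≤ 1) (hN : 0 < N) :
    (t * log t) ^ 2 ≤ (2 * log N * t) ^ 2 + 4 / N ^ 2 := by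
  have hlog_nonpos : log t ≤ 0 := log_nonpos ht0.le ht1
  rcases le_or_gt (1 / N ^ 2) t with ht | ht
  · have : -(2 * log N) ≤ log t := by
      have := log_le_log (by positivity) ht
      rwa [one_div, log_inv, log_pow, Nat.cast_ofNat] at this
    have : log t ^ 2 ≤ (2 * log N) ^ 2 := by nlinarith
    calc (t * log t) ^ 2 = t ^ 2 * log t ^ 2 := by ring
      _ ≤ t ^ 2 * (2 * log N) ^ 2 := by gcongr
      _ ≤ (2 * log N * t) ^ 2 + 4 / N ^ 2 := by nlinarith [div_nonneg zero_le_four (sq_nonneg N)]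
  · -- `|√t log √t| < 1` gives `t (log t)² < 4`.
    have hsqrt := abs_log_mul_self_lt (√t) (sqrt_pos.2 ht0) (sqrt_le_one.2 ht1)
    have : t * log t ^ 2 < 4 := by
      rw [log_sqrt ht0.le] at hsqrt
      have := sq_abs (log t / 2 * √t) ▸ pow_lt_one₀ (abs_nonneg _) hsqrt two_ne_zero
      rw [mul_pow, sq_sqrt ht0.le] at this
      linarith
    have : 4 * t ≤ 4 / N ^ 2 := by rw [← mul_one_div]; linarith
    nlinarith [sq_nonneg (2 * log N * t)]

section Euclidean

variable {n : ℕ}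

theorem l2_eq_norm (b : Fin n → ℝ) : l2 b = ‖WithLp.toLp 2 b‖ := by
  simp [l2, EuclideanSpace.norm_eq]

theorem l2_nonneg (b : Fin n → ℝ) : 0 ≤ l2 b := sqrt_nonneg _

theorem l2_sq (b : Fin n → ℝ) : l2 b ^ 2 = ∑ j, b j ^ 2 :=
  sq_sqrt (Finset.sum_nonneg fun _ _ => sq_nonneg _)

theorem l2_pos {b : Fin n → ℝ} (hb : b ≠ 0) : 0 < l2 b := by
  simpa [l2_eq_norm] using hb

theorem abs_le_l2 (b : Fin n → ℝ) (j : Fin n) : |b j| ≤ l2 b := by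
  simpa [l2_eq_norm] using PiLp.norm_apply_le (WithLp.toLp 2 b) j

theorem l2_add_le (a b : Fin n → ℝ) : l2 (a + b) ≤ l2 a + l2 b := by
  simpa [l2_eq_norm] using norm_add_le (WithLp.toLp 2 a) (WithLp.toLp 2 b)

theorem l2_sub_le (a b : Fin n → ℝ) : l2 (a - b) ≤ l2 a + l2 b := by
  simpa [l2_eq_norm] using norm_sub_le (WithLp.toLp 2 a) (WithLp.toLp 2 b)

theorem l2_smul (c : ℝ) (b : Fin n → ℝ) : l2 (c • b) = |c| * l2 b := by
  simpa [l2_eq_norm] using norm_smul c (WithLp.toLp 2 b)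

theorem l2_single (i : Fin n) : l2 (Pi.single i 1 : Fin n → ℝ) = 1 := by
  simp [l2, Pi.single_apply]

theorem l2_of_abs_eq_one {s : Fin n → ℝ} (hs : ∀ j, |s j| = 1) : l2 s = √n := by
  simp [l2, ← sq_abs, hs]

noncomputable def prodEuclidean (n : ℕ) : (𝕍 n) ≃ₗ[ℝ] EuclideanSpace ℝ (Fin n ⊕ Fin n) :=
  (LinearEquiv.sumArrowLequivProdArrow _ _ ℝ ℝ).symm.trans (WithLp.linearEquiv 2 ℝ _).symm

theorem l2p_eq_norm (x : 𝕍 n) : l2p x = ‖prodEuclidean n x‖ := by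
  simp [l2p, prodEuclidean, EuclideanSpace.norm_eq, Fintype.sum_sum_type]
  rfl

theorem l2p_nonneg (x : 𝕍 n) : 0 ≤ l2p x := sqrt_nonneg _

theorem l2p_pos {x : 𝕍 n} (hx : x ≠ 0) : 0 < l2p x := by
  simpa [l2p_eq_norm] using hx

theorem l2p_eq_sqrt (x : 𝕍 n) : l2p x = √(l2 x.1 ^ 2 + l2 x.2 ^ 2) := by
  rw [l2p, l2_sq, l2_sq]

theorem l2_fst_le_l2p (x : 𝕍 n) : l2 x.1 ≤ l2p x := by
  rw [l2p_eq_sqrt]; exact le_sqrt_of_sq_le (by nlinarith [sq_nonneg (l2 x.2)])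

theorem l2_snd_le_l2p (x : 𝕍 n) : l2 x.2 ≤ l2p x := by
  rw [l2p_eq_sqrt]; exact le_sqrt_of_sq_le (by nlinarith [sq_nonneg (l2 x.1)])

theorem l2p_le_l2_add_l2 (x : 𝕍 n) : l2p x ≤ l2 x.1 + l2 x.2 := by
  rw [l2p_eq_sqrt, sqrt_le_left (add_nonneg (l2_nonneg _) (l2_nonneg _))]
  nlinarith [l2_nonneg x.1, l2_nonneg x.2]

theorem exists_l2p_map_le (T : (𝕍 n) →ₗ[ℝ] 𝕍 n) : ∃ C, 0 ≤ C ∧ ∀ x, l2p (T x) ≤ C * l2p x := by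
  let E := prodEuclidean n
  let T' := LinearMap.toContinuousLinearMap (E.toLinearMap ∘ₗ T ∘ₗ E.symm.toLinearMap)
  exact ⟨‖T'‖, norm_nonneg _, fun x => by simpa [l2p_eq_norm, T'] using T'.le_opNorm (E x)⟩

theorem exists_abs_eq_one_l2p_apply_le (T : (𝕍 n) →ₗ[ℝ] 𝕍 n) {A : ℝ} (hA : 0 ≤ A)
    (hT : ∀ i, l2p (T (0, Pi.single i 1)) ≤ A) :
    ∃ s : Fin n → ℝ, (∀ j, |s j| = 1) ∧ l2p (T (0, s)) ≤ √n * A := by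
  let u : Fin n → 𝕍 n := fun i => T (0, Pi.single i 1)
  obtain ⟨s, hs, hsum⟩ :=
    exists_abs_eq_one_norm_sum_smul_sq_le Finset.univ fun i => prodEuclidean n (u i)
  have hTs : T (0, s) = ∑ i, s i • u i := by
    simp only [u, ← map_smul, ← map_sum]
    congr 1
    ext j <;> simp [Prod.fst_sum, Prod.snd_sum, Finset.sum_apply, Pi.single_apply]
  refine ⟨s, hs, (pow_le_pow_iff_left₀ (l2p_nonneg _) (by positivity) two_ne_zero).1 ?_⟩
  calc l2p (T (0, s)) ^ 2 ≤ ∑ i, l2p (u i) ^ 2 := by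
        simpa [hTs, l2p_eq_norm, map_sum, map_smul] using hsum
    _ ≤ ∑ _i : Fin n, A ^ 2 := Finset.sum_le_sum fun i _ => by gcongr; exacts [l2p_nonneg _, hT i]
    _ = (√n * A) ^ 2 := by simp [mul_pow]

end Euclidean

section KaltonPeck

variable {n : ℕ}

theorem KPF_zero : KPF (0 : Fin n → ℝ) = 0 := funext fun _ => by simp [KPF]

theorem KPF_smul {c : ℝ} (hc : c ≠ 0) (b : Fin n → ℝ) : KPF (c • b) = c • KPF b := by
  funext j
  by_cases hb : b j = 0
  · simp [KPF, hb]
  · simp only [KPF, Pi.smul_apply, smul_eq_mul, mul_eq_zero, hc, hb, or_self, if_false, l2_smul,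
      abs_mul]
    rw [mul_div_mul_left _ _ (abs_ne_zero.2 hc)]
    ring

theorem KPF_apply_sq_le (b : Fin n → ℝ) (j : Fin n) :
    KPF b j ^ 2 ≤ (2 * log n * b j) ^ 2 + 4 / n ^ 2 * l2 b ^ 2 := by
  by_cases hbj : b j = 0
  · rw [show KPF b j = 0 from if_pos hbj, zero_pow two_ne_zero]
    positivity
  have hl2 : 0 < l2 b := l2_pos fun h => hbj (by simp [h])
  set t := |b j| / l2 b
  have hbt : b j ^ 2 = (t * l2 b) ^ 2 := by rw [← sq_abs, div_mul_cancel₀ _ hl2.ne']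
  have key := sq_mul_log_le (N := n) (by positivity) ((div_le_one hl2).2 (abs_le_l2 b j))
    (Nat.cast_pos.2 j.pos)
  calc KPF b j ^ 2 = (t * log t) ^ 2 * l2 b ^ 2 := by
        rw [KPF, if_neg hbj, mul_pow, hbt]
        ring
    _ ≤ ((2 * log n * t) ^ 2 + 4 / n ^ 2) * l2 b ^ 2 := by gcongr
    _ = (2 * log n * b j) ^ 2 + 4 / n ^ 2 * l2 b ^ 2 := by
        rw [mul_pow _ (b j), hbt]
        ring

theorem l2_KPF_le (b : Fin n → ℝ) : l2 (KPF b) ≤ (2 * log n + 2) * l2 b := by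
  have hlog := log_natCast_nonneg n
  have hcard : (n : ℝ) * (4 / n ^ 2) ≤ 4 := by
    rcases n.eq_zero_or_pos with rfl | hn
    · simp
    · rw [sq, ← div_div, mul_div_cancel₀ _ (Nat.cast_ne_zero.2 hn.ne')]
      exact div_le_self zero_le_four (Nat.one_le_cast.2 hn)
  rw [l2, sqrt_le_left (by have := l2_nonneg b; positivity)]
  calc ∑ j, KPF b j ^ 2 ≤ ∑ j, ((2 * log n * b j) ^ 2 + 4 / n ^ 2 * l2 b ^ 2) :=
        Finset.sum_le_sum fun j _ => KPF_apply_sq_le b j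
    _ = (4 * log n ^ 2 + n * (4 / n ^ 2)) * l2 b ^ 2 := by
        simp only [Finset.sum_add_distrib, mul_pow, ← Finset.mul_sum, ← l2_sq, Finset.sum_const,
          Finset.card_univ, Fintype.card_fin, nsmul_eq_mul]
        ring
    _ ≤ ((2 * log n + 2) * l2 b) ^ 2 := by nlinarith [sq_nonneg (l2 b)]

theorem KPF_single (i : Fin n) : KPF (Pi.single i 1 : Fin n → ℝ) = 0 := by
  funext j
  rcases eq_or_ne j i with rfl | h
  · simp [KPF, l2_single]
  · simp [KPF, h]

theorem KPF_of_abs_eq_one {s : Fin n → ℝ} (hs : ∀ j, |s j| = 1) : KPF s = -(log n / 2) • s := by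
  funext j
  have hsj : s j ≠ 0 := fun h => by simpa [h] using hs j
  simp only [KPF, hsj, if_false, hs j, l2_of_abs_eq_one hs, one_div, log_inv, log_sqrt n.cast_nonneg,
    Pi.smul_apply, smul_eq_mul]
  ring

theorem znorm_nonneg (x : 𝕍 n) : 0 ≤ znorm x := add_nonneg (l2_nonneg _) (l2_nonneg _)

theorem znorm_pos {x : 𝕍 n} (hx : x ≠ 0) : 0 < znorm x := by
  rcases eq_or_ne x.2 0 with h2 | h2
  · have h1 : x.1 ≠ 0 := fun h1 => hx (Prod.ext h1 h2)
    simpa [znorm, h2, KPF_zero, l2_eq_norm] using l2_pos h1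
  · exact add_pos_of_pos_of_nonneg (l2_pos h2) (l2_nonneg _)

theorem znorm_zero_single (i : Fin n) : znorm ((0 : Fin n → ℝ), (Pi.single i 1 : Fin n → ℝ)) = 1 := by
  simp [znorm, KPF_single, l2_eq_norm]

theorem znorm_zero_of_abs_eq_one {s : Fin n → ℝ} (hs : ∀ j, |s j| = 1) :
    znorm ((0 : Fin n → ℝ), s) = √n * (1 + log n / 2) := by
  rw [znorm, KPF_of_abs_eq_one hs, zero_sub, ← neg_smul, neg_neg, l2_smul, l2_of_abs_eq_one hs,
    abs_of_nonneg (by have := log_natCast_nonneg n; positivity)]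
  ring

theorem l2p_smul_snd_le_znorm {c : ℝ} (hc : 0 ≤ c) (x : 𝕍 n) :
    l2p (x.1, c • x.2) ≤ (2 * log n + 2 + c) * znorm x := by
  have hlog := log_natCast_nonneg n
  have hfst : l2 x.1 ≤ l2 (x.1 - KPF x.2) + (2 * log n + 2) * l2 x.2 := by
    have := l2_add_le (x.1 - KPF x.2) (KPF x.2)
    rw [sub_add_cancel] at this
    linarith [l2_KPF_le x.2]
  have hsnd : l2 (c • x.2) = c * l2 x.2 := by rw [l2_smul, abs_of_nonneg hc]
  have := l2p_le_l2_add_l2 (x.1, c • x.2)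
  rw [znorm]
  nlinarith [l2_nonneg x.2, l2_nonneg (x.1 - KPF x.2)]

theorem znorm_smul_snd_le_l2p {c : ℝ} (hc : 0 < c) (x : 𝕍 n) :
    znorm (x.1, c⁻¹ • x.2) ≤ (1 + (2 * log n + 3) / c) * l2p x := by
  have hc' : 0 ≤ c⁻¹ := inv_nonneg.2 hc.le
  have hz : znorm (x.1, c⁻¹ • x.2) = c⁻¹ * l2 x.2 + l2 (x.1 - c⁻¹ • KPF x.2) := by
    rw [znorm, KPF_smul (inv_ne_zero hc.ne'), l2_smul, abs_of_nonneg hc']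
  have hfst : l2 (x.1 - c⁻¹ • KPF x.2) ≤ l2 x.1 + c⁻¹ * ((2 * log n + 2) * l2 x.2) := by
    have := l2_sub_le x.1 (c⁻¹ • KPF x.2)
    rw [l2_smul, abs_of_nonneg hc'] at this
    nlinarith [l2_KPF_le x.2]
  have hsnd := mul_le_mul_of_nonneg_left (l2_snd_le_l2p x)
    (mul_nonneg hc' (by linarith [log_natCast_nonneg n] : (0 : ℝ) ≤ 2 * log n + 3))
  rw [hz, div_eq_inv_mul]
  linarith [l2_fst_le_l2p x]

theorem exists_l2p_map_le_znorm (T : (𝕍 n) →ₗ[ℝ] 𝕍 n) : ∃ C, ∀ x, l2p (T x) ≤ C * znorm x := by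
  obtain ⟨C, hC0, hC⟩ := exists_l2p_map_le T
  refine ⟨C * (2 * log n + 3), fun x => (hC x).trans ?_⟩
  have := l2p_smul_snd_le_znorm zero_le_one x
  rw [one_smul] at this
  nlinarith

theorem exists_znorm_map_le_l2p (T : (𝕍 n) →ₗ[ℝ] 𝕍 n) : ∃ C, ∀ x, znorm (T x) ≤ C * l2p x := by
  obtain ⟨C, hC0, hC⟩ := exists_l2p_map_le T
  refine ⟨(2 * log n + 4) * C, fun x => ?_⟩
  have := znorm_smul_snd_le_l2p one_pos (T x)
  rw [inv_one, one_smul, div_one, Prod.mk.eta] at this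
  calc znorm (T x) ≤ (2 * log n + 4) * l2p (T x) := by linarith
    _ ≤ (2 * log n + 4) * (C * l2p x) := by
        gcongr
        exact hC x
    _ = (2 * log n + 4) * C * l2p x := by ring

end KaltonPeck

section BanachMazur

variable {n : ℕ}

theorem one_add_log_div_two_le_ratioSup_mul (hn : 0 < n) (S : (𝕍 n) ≃ₗ[ℝ] 𝕍 n) :
    1 + log n / 2 ≤
      ratioSup znorm l2p (fun x => S x) * ratioSup l2p znorm (fun x => S.symm x) := by
  set A := ratioSup znorm l2p (fun x => S x)
  set B := ratioSup l2p znorm (fun x => S.symm x)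
  -- An unbounded `⨆` over `ℝ` is `0`, so both ratios must first be shown to be bounded.
  obtain ⟨C, hC⟩ := exists_l2p_map_le_znorm S.toLinearMap
  obtain ⟨C', hC'⟩ := exists_znorm_map_le_l2p S.symm.toLinearMap
  have hA : ∀ x, x ≠ 0 → l2p (S x) ≤ A * znorm x := fun x hx =>
    le_ratioSup_mul (fun _ => znorm_pos) (fun x _ => hC x) hx
  have hB : ∀ y, y ≠ 0 → znorm (S.symm y) ≤ B * l2p y := fun y hy =>
    le_ratioSup_mul (fun _ => l2p_pos) (fun y _ => hC' y) hy
  have hB0 : 0 ≤ B := ratioSup_nonneg l2p_nonneg znorm_nonneg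
  have hA0 : 0 ≤ A := ratioSup_nonneg znorm_nonneg l2p_nonneg
  have hu : ∀ i, l2p (S (0, Pi.single i 1)) ≤ A := fun i => by
    simpa [znorm_zero_single] using hA (0, Pi.single i 1) (by simp)
  obtain ⟨s, hs, hl2p⟩ := exists_abs_eq_one_l2p_apply_le S.toLinearMap hA0 hu
  have hs0 : ((0 : Fin n → ℝ), s) ≠ 0 := fun h => by
    have h0 := hs ⟨0, hn⟩
    rw [show s ⟨0, hn⟩ = 0 from congrFun (congrArg Prod.snd h) _, abs_zero] at h0
    exact zero_ne_one h0
  have key : √n * (1 + log n / 2) ≤ √n * (A * B) :=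
    calc √n * (1 + log n / 2) = znorm (S.symm (S (0, s))) := by
          rw [S.symm_apply_apply, znorm_zero_of_abs_eq_one hs]
      _ ≤ B * l2p (S (0, s)) := hB _ (S.map_ne_zero_iff.2 hs0)
      _ ≤ B * (√n * A) := by gcongr; exact hl2p
      _ = √n * (A * B) := by ring
  exact le_of_mul_le_mul_left key (by positivity)

noncomputable def scaleSnd (n : ℕ) (c : ℝ) (hc : c ≠ 0) : (𝕍 n) ≃ₗ[ℝ] 𝕍 n :=
  (LinearEquiv.refl ℝ _).prodCongr (LinearEquiv.smulOfNeZero ℝ _ c hc)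

theorem ratioSup_scaleSnd_mul_le {c : ℝ} (hc : 0 < c) :
    ratioSup znorm l2p (fun x => scaleSnd n c hc.ne' x) *
        ratioSup l2p znorm (fun x => (scaleSnd n c hc.ne').symm x) ≤
      (2 * log n + 2 + c) * (1 + (2 * log n + 3) / c) := by
  refine mul_le_mul (ratioSup_le (by positivity) (fun _ => znorm_pos) fun x _ => ?_)
    (ratioSup_le (by positivity) (fun _ => l2p_pos) fun x _ => ?_)
    (ratioSup_nonneg l2p_nonneg znorm_nonneg) (by positivity)
  · exact l2p_smul_snd_le_znorm hc.le x
  · exact znorm_smul_snd_le_l2p hc x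

end BanachMazur

/-- The Banach–Mazur distance between `Z_2^n` and `ℓ_2^{2n}` is of order `log n`. -/
theorem banach_mazur_znorm_l2 :
    ∃ c₁ : ℝ, 0 < c₁ ∧ ∃ c₂ : ℝ, 0 < c₂ ∧ ∀ n : ℕ, 2 ≤ n →
      (∀ S : ((Fin n → ℝ) × (Fin n → ℝ)) ≃ₗ[ℝ] ((Fin n → ℝ) × (Fin n → ℝ)),
        c₁ * Real.log n ≤
          ratioSup znorm l2p (fun x => S x) * ratioSup l2p znorm (fun x => S.symm x)) ∧
      (∃ S : ((Fin n → ℝ) × (Fin n → ℝ)) ≃ₗ[ℝ] ((Fin n → ℝ) × (Fin n → ℝ)),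
        ratioSup znorm l2p (fun x => S x) * ratioSup l2p znorm (fun x => S.symm x) ≤
          c₂ * Real.log n) := by
  refine ⟨1 / 2, by norm_num, 23, by norm_num, fun n hn => ⟨fun S => ?_, ?_⟩⟩
  · linarith [one_add_log_div_two_le_ratioSup_mul (by omega) S]
  · have hlog : 2 / 3 < log n := (by linarith [log_two_gt_d9] : (2 / 3 : ℝ) < log 2).trans_le
      (log_le_log two_pos (by exact_mod_cast hn))
    set K := 2 * log n + 2
    have hK : 0 < K := by linarith
    refine ⟨scaleSnd n K hK.ne', (ratioSup_scaleSnd_mul_le hK).trans ?_⟩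
    have : (K + K) * (1 + (K + 1) / K) = 4 * K + 2 := by field_simp; ring
    rw [show 2 * log n + 3 = K + 1 by ring, this]
    linarith
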